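/- For n > 0, the reduced denominator D_n of x_n is even if and only if n ≡ 0 (mod 4), and the reduced numerator of x_n is even if and only if n ≡ 2 or 3 (mod 4). -/
import Mathlib

private def aa : ℕ → ℕ
  | 0 => 1
  | 1 => 1
  | (n+2) => aa (n+1) + (n+1) * aa n

private lemma aa_rec (n : ℕ) : aa (n+2) = aa (n+1) + (n+1) * aa n := rfl

private lemma aa_pos : ∀ n, 0 < aa n
  | 0 => one_pos
  | 1 => one_pos
  | (n+2) => by
      have h := aa_pos (n+1)
      rw [aa_rec]; omega

private lemma aa_key (k : ℕ) : ∃ b0 b1 b2 b3 : ℕ, Odd b0 ∧ Odd b1 ∧ Odd b2 ∧ Odd b3 ∧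
    aa (4*k) = 2^k * b0 ∧ aa (4*k+1) = 2^k * b1 ∧ aa (4*k+2) = 2^(k+1) * b2 ∧
    aa (4*k+3) = 2^(k+2) * b3 := by
  induction k with
  | zero =>
      refine ⟨1, 1, 1, 1, odd_one, odd_one, odd_one, odd_one, ?_, ?_, ?_, ?_⟩ <;> decide
  | succ k ih =>
      obtain ⟨b0, b1, b2, b3, hb0, hb1, hb2, hb3, h0, h1, h2, h3⟩ := ih
      refine ⟨2*b3 + (4*k+3)*b2,
             (2*b3 + (4*k+3)*b2) + 8*(k+1)*b3,
             (2*k+3)*(2*b3 + (4*k+3)*b2) + 4*(k+1)*b3,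
             (2*k+3)*(2*b3 + (4*k+3)*b2) + 2*(k+1)*(4*k+7)*b3, ?_, ?_, ?_, ?_, ?_, ?_, ?_, ?_⟩
      · rcases hb2 with ⟨c, hc⟩; rcases hb3 with ⟨d, hd⟩; subst hc hd
        exact ⟨2*d+4*k*c+2*k+3*c+2, by ring⟩
      · rcases hb2 with ⟨c, hc⟩; rcases hb3 with ⟨d, hd⟩; subst hc hd
        exact ⟨(2*d+4*k*c+2*k+3*c+2) + 8*k*d+4*k+8*d+4, by ring⟩
      · rcases hb2 with ⟨c, hc⟩; rcases hb3 with ⟨d, hd⟩; subst hc hd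
        exact ⟨(2*k+3)*(2*d+4*k*c+2*k+3*c+2) + 4*k*d + 4*d + 3*k + 3, by ring⟩
      · rcases hb2 with ⟨c, hc⟩; rcases hb3 with ⟨d, hd⟩; subst hc hd
        exact ⟨(2*k+3)*(2*d+4*k*c+2*k+3*c+2) + (k+1)*(4*k+7)*(2*d+1) + k + 1, by ring⟩
      · have e : 4*(k+1) = (4*k+2)+2 := by ring
        rw [e, aa_rec, h2, h3]; ring
      · have e : 4*(k+1)+1 = (4*k+3)+2 := by ring
        rw [e, aa_rec]
        have e2 : 4*k+3+1 = (4*k+2)+2 := by ring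
        rw [e2, aa_rec, h2, h3]; ring
      · have e : 4*(k+1)+2 = (4*k+4)+2 := by ring
        rw [e, aa_rec]
        have e1 : 4*k+4+1 = (4*k+3)+2 := by ring
        have e2 : 4*k+4 = (4*k+2)+2 := by ring
        rw [e1, aa_rec, e2, aa_rec, h2, h3]; ring
      · have e : 4*(k+1)+3 = (4*k+5)+2 := by ring
        rw [e, aa_rec]
        have e0 : 4*k+5+1 = (4*k+4)+2 := by ring
        have e1 : 4*k+5 = (4*k+3)+2 := by ring
        have e2 : 4*k+4 = (4*k+2)+2 := by ring
        rw [e0, aa_rec, e1, aa_rec, e2, aa_rec, h2, h3]; ring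

private lemma x_eq (x : ℕ → ℚ) (hx0 : x 0 = 1)
    (hx : ∀ n : ℕ, x (n + 1) = 1 + (n : ℚ) / x n) :
    ∀ n, x (n+1) = (aa (n+1) : ℚ) / (aa n) := by
  intro n
  induction n with
  | zero => simp [hx 0, hx0, aa]
  | succ n ih =>
      have h1 : (0:ℚ) < (aa (n+1) : ℚ) := by exact_mod_cast aa_pos (n+1)
      have h0 : (0:ℚ) < (aa n : ℚ) := by exact_mod_cast aa_pos n
      rw [hx (n+1), ih, aa_rec]
      push_cast
      field_simp

private lemma ratpar (A B : ℕ) (hB : 0 < B) (h : ¬(2 ∣ A) ∨ ¬(2 ∣ B)) :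
    (2 ∣ ((A:ℚ)/B).den ↔ 2 ∣ B) ∧ ((2:ℤ) ∣ ((A:ℚ)/B).num ↔ (2:ℤ) ∣ (A:ℤ)) := by
  set q := (A:ℚ)/B with hq
  have hBQ : ((B:ℚ)) ≠ 0 := by positivity
  have hden : q.den ≠ 0 := q.den_nz
  have key : (q.num:ℚ)/(q.den:ℚ) = (A:ℚ)/B := by rw [Rat.num_div_den]
  rw [div_eq_div_iff (by exact_mod_cast hden) hBQ] at key
  have keyZ : q.num * (B:ℤ) = (A:ℤ) * (q.den:ℤ) := by exact_mod_cast key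
  have p2 : Prime (2:ℤ) := Int.prime_two
  have hnd : ¬((2:ℤ) ∣ q.num ∧ (2:ℤ) ∣ (q.den:ℤ)) := by
    rintro ⟨ha, hb⟩
    have h1 : 2 ∣ q.num.natAbs := Int.natAbs_dvd_natAbs.mpr ha
    have h2 : 2 ∣ q.den := by exact_mod_cast hb
    have := Nat.dvd_gcd h1 h2
    rw [q.reduced] at this
    omega
  constructor
  · constructor
    · intro hd
      have hd' : (2:ℤ) ∣ (q.den:ℤ) := by exact_mod_cast hd
      have : (2:ℤ) ∣ q.num * (B:ℤ) := keyZ ▸ Dvd.dvd.mul_left hd' (A:ℤ)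
      rcases p2.dvd_mul.mp this with h' | h'
      · exact absurd ⟨h', hd'⟩ hnd
      · exact_mod_cast h'
    · intro hd
      have hA : ¬ 2 ∣ A := by
        rcases h with h | h
        · exact h
        · exact absurd hd h
      have : (2:ℤ) ∣ (A:ℤ) * (q.den:ℤ) := keyZ ▸ Dvd.dvd.mul_left (by exact_mod_cast hd) q.num
      rcases p2.dvd_mul.mp this with h' | h'
      · exact absurd (by exact_mod_cast h' : 2 ∣ A) hA
      · exact_mod_cast h'
  · constructor
    · intro hn
      have hdodd : ¬ (2:ℤ) ∣ (q.den:ℤ) := fun hc => hnd ⟨hn, hc⟩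
      have : (2:ℤ) ∣ (A:ℤ) * (q.den:ℤ) := keyZ ▸ Dvd.dvd.mul_right hn (B:ℤ)
      rcases p2.dvd_mul.mp this with h' | h'
      · exact h'
      · exact absurd h' hdodd
    · intro hA
      have hB2 : ¬ (2:ℤ) ∣ (B:ℤ) := by
        rcases h with h | h
        · intro hc; exact h (by exact_mod_cast hA)
        · intro hc; exact h (by exact_mod_cast hc)
      have : (2:ℤ) ∣ q.num * (B:ℤ) := keyZ ▸ Dvd.dvd.mul_right hA (q.den:ℤ)
      rcases p2.dvd_mul.mp this with h' | h'
      · exact h'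
      · exact absurd h' hB2
private lemma odd_not_dvd {c : ℕ} (hc : Odd c) : ¬ 2 ∣ c := by
  have := Nat.odd_iff.mp hc; omega

theorem stmt_19 (x : ℕ → ℚ) (hx0 : x 0 = 1)
    (hx : ∀ n : ℕ, x (n + 1) = 1 + (n : ℚ) / x n) :
    ∀ n : ℕ, 0 < n →
      (2 ∣ (x n).den ↔ n % 4 = 0) ∧
      ((2 : ℤ) ∣ (x n).num ↔ (n % 4 = 2 ∨ n % 4 = 3)) := by
  intro n hn
  obtain ⟨k, r, hr4, rfl⟩ : ∃ k r, r < 4 ∧ n = 4*k + r :=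
    ⟨n/4, n%4, Nat.mod_lt _ (by norm_num), (Nat.div_add_mod n 4).symm⟩
  interval_cases r
  · -- r = 0
    cases k with
    | zero => omega
    | succ j =>
      obtain ⟨c0, _, _, _, hc0, _, _, _, h0, _, _, _⟩ := aa_key (j+1)
      obtain ⟨_, _, _, c3, _, _, _, hc3, _, _, _, h3⟩ := aa_key j
      rw [show 4*(j+1) = 4*j+3+1 from by ring] at h0
      have hxv : x (4*(j+1)+0) = ((c0:ℕ):ℚ)/((2*c3 : ℕ):ℚ) := by
        rw [show 4*(j+1)+0 = 4*j+3+1 from by ring, x_eq x hx0 hx (4*j+3), h0, h3]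
        push_cast
        rw [show ((2:ℚ)^(j+2)) * c3 = 2^(j+1) * (2*c3) from by ring]
        exact mul_div_mul_left _ _ (by positivity)
      rw [hxv]
      obtain ⟨hd, hnum⟩ := ratpar c0 (2*c3) (by have := hc3.pos; omega) (Or.inl (odd_not_dvd hc0))
      refine ⟨?_, ?_⟩
      · rw [hd]; exact iff_of_true ⟨c3, rfl⟩ (by omega)
      · rw [hnum]
        refine iff_of_false (fun hc => odd_not_dvd hc0 (by exact_mod_cast hc)) (by omega)
  · -- r = 1
    obtain ⟨c0, c1, _, _, hc0, hc1, _, _, h0, h1, _, _⟩ := aa_key k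
    have hxv : x (4*k+1) = ((c1:ℕ):ℚ)/((c0 : ℕ):ℚ) := by
      rw [x_eq x hx0 hx (4*k), h0, h1]
      push_cast
      exact mul_div_mul_left _ _ (by positivity)
    rw [hxv]
    obtain ⟨hd, hnum⟩ := ratpar c1 c0 hc0.pos (Or.inl (odd_not_dvd hc1))
    refine ⟨?_, ?_⟩
    · rw [hd]; exact iff_of_false (odd_not_dvd hc0) (by omega)
    · rw [hnum]
      exact iff_of_false (fun hc => odd_not_dvd hc1 (by exact_mod_cast hc)) (by omega)
  · -- r = 2
    obtain ⟨c0, c1, c2, _, hc0, hc1, hc2, _, h0, h1, h2, _⟩ := aa_key k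
    have hxv : x (4*k+2) = ((2*c2:ℕ):ℚ)/((c1 : ℕ):ℚ) := by
      rw [show 4*k+2 = (4*k+1)+1 from rfl, x_eq x hx0 hx (4*k+1), h1, h2]
      push_cast
      rw [show ((2:ℚ)^(k+1)) * c2 = 2^k * (2*c2) from by ring]
      exact mul_div_mul_left _ _ (by positivity)
    rw [hxv]
    obtain ⟨hd, hnum⟩ := ratpar (2*c2) c1 hc1.pos (Or.inr (odd_not_dvd hc1))
    refine ⟨?_, ?_⟩
    · rw [hd]; exact iff_of_false (odd_not_dvd hc1) (by omega)
    · rw [hnum]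
      exact iff_of_true (by exact_mod_cast Dvd.intro c2 rfl) (by omega)
  · -- r = 3
    obtain ⟨c0, c1, c2, c3, hc0, hc1, hc2, hc3, h0, h1, h2, h3⟩ := aa_key k
    have hxv : x (4*k+3) = ((2*c3:ℕ):ℚ)/((c2 : ℕ):ℚ) := by
      rw [show 4*k+3 = (4*k+2)+1 from rfl, x_eq x hx0 hx (4*k+2), h2, h3]
      push_cast
      rw [show ((2:ℚ)^(k+2)) * c3 = 2^(k+1) * (2*c3) from by ring]
      exact mul_div_mul_left _ _ (by positivity)
    rw [hxv]
    obtain ⟨hd, hnum⟩ := ratpar (2*c3) c2 hc2.pos (Or.inr (odd_not_dvd hc2))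
    refine ⟨?_, ?_⟩
    · rw [hd]; exact iff_of_false (odd_not_dvd hc2) (by omega)
    · rw [hnum]
      exact iff_of_true (by exact_mod_cast Dvd.intro c3 rfl) (by omega)
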